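/- arXiv:2507.21643 — 2 statements merged into one kernel-verified Lean document; each statement's English description precedes it below -/
import Mathlib

section
/- For every integer n ≥ 1 and every nonnegative integer r, ∑_{i=0}^{r} (−1)^{r−i}·C(r,i)·∑_{j=0}^{∞} φ̃_{n,j+i}/2^{j+1} = r!·w̃_{n,r}, where each inner series converges. In particular (r = 0), ∑_{j=0}^{∞} φ̃_{n,j}/2^{j+1} = w̃_n. -/
/-!
Write `φ̃_{n,m} = ∑_s (-1)^s R(m,n,s)` with the `m`-Stirling numbers
`R(m,n,s) = ∑_p C(n,p) m^p {n-p brace s}`. Pascal's rule and the Stirling recurrence give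
`R(m,n+1,s) = (m+s) R(m,n,s) + R(m,n,s-1)`, which is also satisfied by
`∑_t {n brace t} C(t,s) m(m-1)⋯(m-t+s+1)`; hence `φ̃_{n,m}` is an explicit linear combination of
binomial coefficients `C(m,k)`. For those, `∑_j C(j+i,k)/2^{j+1} = ∑_{a≤k} C(i,a)` by Vandermonde,
and the alternating sum over `i` keeps exactly the terms with `k ≥ r`. What survives is
`∑_t {n brace t} ∑_{s ≤ t-r} (-1)^s t!/s! = r! w̃_{n,r}`.
-/

/-- Stirling numbers of the second kind. -/
def stirling2 : ℕ → ℕ → ℕ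
  | 0, 0 => 1
  | 0, _ + 1 => 0
  | _ + 1, 0 => 0
  | n + 1, k + 1 => (k + 1) * stirling2 n (k + 1) + stirling2 n k

/-- Derangement numbers `d_n = n! ∑_{i=0}^n (-1)^i / i!`. -/
noncomputable def derang (n : ℕ) : ℝ :=
  (n.factorial : ℝ) * ∑ i ∈ Finset.range (n + 1), (-1 : ℝ) ^ i / (i.factorial : ℝ)

/-- Partial derangement numbers `d_{n,r}`. -/
noncomputable def pderang (n r : ℕ) : ℝ :=
  if r ≤ n then (n.choose r : ℝ) * derang (n - r) else 0

/-- Partial deranged Bell numbers `w̃_{n,r}`. -/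
noncomputable def pdb (n r : ℕ) : ℝ :=
  ∑ k ∈ Finset.range (n + 1), (stirling2 n k : ℝ) * pderang k r

/-- Complementary Bell numbers `φ̃_n = ∑_{k=0}^n (-1)^k {n brace k}`. -/
def cbell (n : ℕ) : ℝ :=
  ∑ k ∈ Finset.range (n + 1), (-1 : ℝ) ^ k * (stirling2 n k : ℝ)

/-- Complementary `r`-Bell numbers `φ̃_{n,r} = ∑_{k=0}^n C(n,k) r^k φ̃_{n-k}`. -/
def cbellR (n r : ℕ) : ℝ :=
  ∑ k ∈ Finset.range (n + 1), (n.choose k : ℝ) * (r : ℝ) ^ k * cbell (n - k)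

open Finset

theorem stirling2_eq_stirlingSecond : stirling2 = Nat.stirlingSecond := by
  funext n k
  induction n generalizing k with
  | zero => cases k <;> rfl
  | succ n ih => cases k <;> simp [stirling2, Nat.stirlingSecond_succ_succ, ih]

namespace Nat

theorem sum_stirlingSecond_succ_mul (n : ℕ) (F : ℕ → ℕ) :
    ∑ t ∈ range (n + 2), stirlingSecond (n + 1) t * F t =
      ∑ t ∈ range (n + 1), stirlingSecond n t * (t * F t + F (t + 1)) := by
  have hshift : ∑ t ∈ range (n + 1), (t + 1) * stirlingSecond n (t + 1) * F (t + 1) =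
      ∑ t ∈ range (n + 1), t * stirlingSecond n t * F t := by
    have h₁ := sum_range_succ' (fun t => t * stirlingSecond n t * F t) (n + 1)
    have h₂ := sum_range_succ (fun t => t * stirlingSecond n t * F t) (n + 1)
    simp only [stirlingSecond_eq_zero_of_lt n.lt_succ_self] at h₁ h₂
    lia
  calc ∑ t ∈ range (n + 2), stirlingSecond (n + 1) t * F t
      = ∑ t ∈ range (n + 1), ((t + 1) * stirlingSecond n (t + 1) * F (t + 1) +
          stirlingSecond n t * F (t + 1)) := by
        rw [sum_range_succ', stirlingSecond_succ_zero, zero_mul, add_zero]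
        exact sum_congr rfl fun t _ => by rw [stirlingSecond_succ_succ]; ring
    _ = _ := by
        rw [sum_add_distrib, hshift, ← sum_add_distrib]
        exact sum_congr rfl fun t _ => by ring

theorem descFactorial_sub_succ_mul_choose (m t u : ℕ) :
    (t * m.descFactorial (t - u) + m.descFactorial (t + 1 - u)) * t.choose u =
      (m + u) * m.descFactorial (t - u) * t.choose u := by
  rcases Nat.lt_or_ge t u with htu | hut
  · simp [choose_eq_zero_of_lt htu]
  rw [show t + 1 - u = t - u + 1 by omega, descFactorial_succ]
  rcases le_or_gt (t - u) m with hm | hm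
  · congr 1
    rw [← add_mul]
    congr 1
    omega
  · simp [descFactorial_eq_zero_iff_lt.mpr hm]

end Nat

def rStirling2 (m n s : ℕ) : ℕ :=
  ∑ p ∈ range (n + 1), n.choose p * m ^ p * Nat.stirlingSecond (n - p) s

theorem rStirling2_succ (m n s : ℕ) :
    rStirling2 m (n + 1) s = m * rStirling2 m n s +
      ∑ p ∈ range (n + 1), n.choose p * m ^ p * Nat.stirlingSecond (n - p + 1) s := by
  have := sum_choose_succ_mul (fun p q => m ^ p * Nat.stirlingSecond q s) n
  simp only [Nat.cast_id, ← mul_assoc] at this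
  rw [rStirling2, this, add_comm, rStirling2, mul_sum]
  congr 1
  · exact sum_congr rfl fun p _ => by ring
  · exact sum_congr rfl fun p hp => by
      rw [Nat.sub_add_comm (Nat.lt_succ_iff.mp (mem_range.mp hp))]

theorem rStirling2_succ_zero (m n : ℕ) : rStirling2 m (n + 1) 0 = m * rStirling2 m n 0 := by
  simp [rStirling2_succ]

theorem rStirling2_succ_succ (m n s : ℕ) :
    rStirling2 m (n + 1) (s + 1) = (m + s + 1) * rStirling2 m n (s + 1) + rStirling2 m n s := by
  rw [rStirling2_succ]
  simp only [rStirling2, mul_sum, ← sum_add_distrib]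
  refine sum_congr rfl fun p _ => ?_
  rw [Nat.stirlingSecond_succ_succ]
  ring

theorem rStirling2_eq_sum_descFactorial (m n s : ℕ) :
    rStirling2 m n s =
      ∑ t ∈ range (n + 1), Nat.stirlingSecond n t * (t.choose s * m.descFactorial (t - s)) := by
  induction n generalizing s with
  | zero => cases s <;> simp [rStirling2]
  | succ n ih =>
    rw [Nat.sum_stirlingSecond_succ_mul]
    cases s with
    | zero =>
      rw [rStirling2_succ_zero, ih, mul_sum]
      refine sum_congr rfl fun t _ => ?_
      have := Nat.descFactorial_sub_succ_mul_choose m t 0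
      simp only [Nat.choose_zero_right, Nat.sub_zero, mul_one, one_mul, add_zero] at this ⊢
      linear_combination (Nat.stirlingSecond n t) * this.symm
    | succ s =>
      rw [rStirling2_succ_succ, ih, ih, mul_sum, ← sum_add_distrib]
      refine sum_congr rfl fun t _ => ?_
      have := Nat.descFactorial_sub_succ_mul_choose m t (s + 1)
      rw [Nat.add_sub_add_right] at this ⊢
      rw [Nat.choose_succ_succ']
      linear_combination (Nat.stirlingSecond n t) * this.symm

theorem cbellR_eq_sum_rStirling2 (n m : ℕ) :
    cbellR n m = ∑ s ∈ range (n + 1), (-1 : ℝ) ^ s * rStirling2 m n s := by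
  have hcbell : ∀ p ∈ range (n + 1), cbell (n - p) =
      ∑ s ∈ range (n + 1), (-1 : ℝ) ^ s * Nat.stirlingSecond (n - p) s := by
    intro p hp
    rw [cbell, stirling2_eq_stirlingSecond]
    refine sum_subset (range_subset_range.mpr (by omega)) fun s _ hs => ?_
    rw [Nat.stirlingSecond_eq_zero_of_lt (by simpa using hs)]
    simp
  rw [cbellR, sum_congr rfl fun p hp => by rw [hcbell p hp]]
  simp only [rStirling2, Nat.cast_sum, Nat.cast_mul, Nat.cast_pow, mul_sum]
  rw [sum_comm]
  exact sum_congr rfl fun s _ => sum_congr rfl fun p _ => by ring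

-- For `s > t` the truncated `t - s` is harmless: the weight vanishes through `t.choose s`.
theorem cbellR_eq_sum_choose (n m : ℕ) :
    cbellR n m = ∑ x ∈ range (n + 1) ×ˢ range (n + 1),
      (Nat.stirlingSecond n x.1 : ℝ) * ((-1) ^ x.2 * x.1.choose x.2 * (x.1 - x.2).factorial) *
        m.choose (x.1 - x.2) := by
  simp only [cbellR_eq_sum_rStirling2, rStirling2_eq_sum_descFactorial,
    Nat.descFactorial_eq_factorial_mul_choose, Nat.cast_sum, Nat.cast_mul, mul_sum, sum_product]
  rw [sum_comm]
  exact sum_congr rfl fun t _ => sum_congr rfl fun s _ => by ring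

theorem hasSum_choose_div_two_pow (k : ℕ) :
    HasSum (fun j : ℕ => (j.choose k : ℝ) / 2 ^ (j + 1)) 1 := by
  have h := (hasSum_choose_mul_geometric_of_norm_lt_one k
    (r := (2⁻¹ : ℝ)) (by norm_num)).div_const (2 ^ (k + 1))
  rw [show (1 : ℝ) - 2⁻¹ = 2⁻¹ by norm_num, inv_pow, one_div, inv_inv,
    div_self (by positivity)] at h
  rw [← hasSum_nat_add_iff' k, sum_eq_zero fun j hj => by
    rw [Nat.choose_eq_zero_of_lt (mem_range.mp hj), Nat.cast_zero, zero_div], sub_zero]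
  refine h.congr_fun fun j => ?_
  rw [inv_pow]
  field_simp
  ring

theorem hasSum_choose_add_div_two_pow (i k : ℕ) :
    HasSum (fun j : ℕ => ((j + i).choose k : ℝ) / 2 ^ (j + 1))
      (∑ a ∈ range (k + 1), (i.choose a : ℝ)) := by
  have h := hasSum_sum fun (x : ℕ × ℕ) (_ : x ∈ antidiagonal k) =>
    (hasSum_choose_div_two_pow x.2).mul_left (i.choose x.1 : ℝ)
  simp only [mul_one, Nat.sum_antidiagonal_eq_sum_range_succ (fun a _ => (i.choose a : ℝ))] at h
  refine h.congr_fun fun j => ?_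
  simp only [add_comm j i, Nat.add_choose_eq, Nat.cast_sum, Nat.cast_mul, sum_div, mul_div_assoc]

theorem sum_neg_one_pow_mul_choose_mul_choose (r a : ℕ) :
    ∑ i ∈ range (r + 1), (-1 : ℝ) ^ (r - i) * r.choose i * i.choose a =
      if r = a then 1 else 0 := by
  have h := fwdDiff_iter_choose_zero a r
  rw [fwdDiff_iter_eq_sum_shift] at h
  simp only [zero_add, smul_eq_mul, mul_one] at h
  exact_mod_cast h

theorem sum_neg_one_pow_mul_choose_mul_sum_choose (r k : ℕ) :
    ∑ i ∈ range (r + 1), (-1 : ℝ) ^ (r - i) * r.choose i * ∑ a ∈ range (k + 1), (i.choose a : ℝ) =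
      if r ≤ k then 1 else 0 := by
  simp_rw [mul_sum]
  rw [sum_comm]
  simp_rw [sum_neg_one_pow_mul_choose_mul_choose]
  simp

section FiniteBinomialCombination

variable {ι : Type*} (X : Finset ι) (w : ι → ℝ) (κ : ι → ℕ) {f : ℕ → ℝ}

theorem hasSum_comp_add_div_two_pow_of_eq_sum_choose
    (hf : ∀ m, f m = ∑ x ∈ X, w x * m.choose (κ x)) (i : ℕ) :
    HasSum (fun j => f (j + i) / 2 ^ (j + 1))
      (∑ x ∈ X, w x * ∑ a ∈ range (κ x + 1), (i.choose a : ℝ)) := by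
  simp_rw [hf, sum_div, mul_div_assoc]
  exact hasSum_sum fun x _ => (hasSum_choose_add_div_two_pow i (κ x)).mul_left (w x)

theorem sum_neg_one_pow_mul_choose_mul_tsum_of_eq_sum_choose
    (hf : ∀ m, f m = ∑ x ∈ X, w x * m.choose (κ x)) (r : ℕ) :
    ∑ i ∈ range (r + 1), (-1 : ℝ) ^ (r - i) * r.choose i * ∑' j, f (j + i) / 2 ^ (j + 1) =
      ∑ x ∈ X, if r ≤ κ x then w x else 0 := by
  simp_rw [(hasSum_comp_add_div_two_pow_of_eq_sum_choose X w κ hf _).tsum_eq, mul_sum]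
  rw [sum_comm]
  refine sum_congr rfl fun x _ => ?_
  simp_rw [mul_left_comm _ (w x), ← mul_sum, sum_neg_one_pow_mul_choose_mul_sum_choose, mul_ite,
    mul_one, mul_zero]

end FiniteBinomialCombination

theorem sum_ite_neg_one_pow_mul_choose_mul_factorial (r t N : ℕ) (ht : t ≤ N) :
    ∑ s ∈ range (N + 1),
        (if r ≤ t - s then (-1 : ℝ) ^ s * t.choose s * (t - s).factorial else 0) =
      r.factorial * pderang t r := by
  rcases lt_or_ge t r with hrt | hrt
  · rw [pderang, if_neg (by omega), mul_zero]
    exact sum_eq_zero fun s _ => if_neg (by omega)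
  have hvanish : ∀ s ∈ range (N + 1), s ∉ range (t - r + 1) →
      (if r ≤ t - s then (-1 : ℝ) ^ s * t.choose s * (t - s).factorial else 0) = 0 := by
    intro s _ hs
    rw [mem_range, not_lt] at hs
    split_ifs with h
    · rw [Nat.choose_eq_zero_of_lt (by omega), Nat.cast_zero, mul_zero, zero_mul]
    · rfl
  rw [← sum_subset (range_subset_range.mpr (by omega)) hvanish, pderang, if_pos hrt, derang,
    ← mul_assoc, ← mul_assoc, mul_sum]
  refine sum_congr rfl fun s hs => ?_
  have hs : s ≤ t - r := Nat.lt_succ_iff.mp (mem_range.mp hs)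
  rw [if_pos (by omega)]
  have h₁ : (t.choose s : ℝ) * s.factorial * (t - s).factorial = t.factorial := by
    exact_mod_cast Nat.choose_mul_factorial_mul_factorial (by omega)
  have h₂ : (r.factorial : ℝ) * t.choose r * (t - r).factorial = t.factorial := by
    rw [mul_comm (r.factorial : ℝ)]
    exact_mod_cast Nat.choose_mul_factorial_mul_factorial hrt
  rw [h₂, ← h₁]
  field_simp

theorem factorial_mul_pdb (n r : ℕ) :
    r.factorial * pdb n r = ∑ x ∈ range (n + 1) ×ˢ range (n + 1),
      if r ≤ x.1 - x.2 then
        (Nat.stirlingSecond n x.1 : ℝ) * ((-1) ^ x.2 * x.1.choose x.2 * (x.1 - x.2).factorial)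
      else 0 := by
  rw [pdb, stirling2_eq_stirlingSecond, mul_sum, sum_product]
  refine sum_congr rfl fun t ht => ?_
  rw [mul_left_comm, ← sum_ite_neg_one_pow_mul_choose_mul_factorial r t n
    (Nat.lt_succ_iff.mp (mem_range.mp ht)), mul_sum]
  simp_rw [mul_ite, mul_zero]

theorem sum_cbellR_div_two_pow_eq_general (n r : ℕ) :
    (∀ i ≤ r, Summable fun j : ℕ => cbellR n (j + i) / 2 ^ (j + 1)) ∧
    (∑ i ∈ Finset.range (r + 1), (-1 : ℝ) ^ (r - i) * (r.choose i : ℝ) *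
        ∑' j : ℕ, cbellR n (j + i) / 2 ^ (j + 1) =
      (r.factorial : ℝ) * pdb n r) ∧
    (∑' j : ℕ, cbellR n j / 2 ^ (j + 1) = pdb n 0) := by
  have hrep := cbellR_eq_sum_choose n
  have hsum : ∀ q : ℕ, ∑ i ∈ Finset.range (q + 1), (-1 : ℝ) ^ (q - i) * (q.choose i : ℝ) *
      ∑' j : ℕ, cbellR n (j + i) / 2 ^ (j + 1) = (q.factorial : ℝ) * pdb n q := fun q => by
    rw [sum_neg_one_pow_mul_choose_mul_tsum_of_eq_sum_choose _ _ _ hrep, factorial_mul_pdb]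
  refine ⟨fun i _ => (hasSum_comp_add_div_two_pow_of_eq_sum_choose _ _ _ hrep i).summable,
    hsum r, ?_⟩
  simpa using hsum 0

/-- For `n ≥ 1`, each series `∑_{j≥0} φ̃_{n,j+i}/2^{j+1}` converges, and
`∑_{i=0}^r (-1)^{r-i} C(r,i) ∑_{j≥0} φ̃_{n,j+i}/2^{j+1} = r! w̃_{n,r}`;
in particular `∑_{j≥0} φ̃_{n,j}/2^{j+1} = w̃_n`. -/
theorem sum_cbellR_div_two_pow_eq (n r : ℕ) (hn : 1 ≤ n) :
    (∀ i ≤ r, Summable fun j : ℕ => cbellR n (j + i) / 2 ^ (j + 1)) ∧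
    (∑ i ∈ Finset.range (r + 1), (-1 : ℝ) ^ (r - i) * (r.choose i : ℝ) *
        ∑' j : ℕ, cbellR n (j + i) / 2 ^ (j + 1) =
      (r.factorial : ℝ) * pdb n r) ∧
    (∑' j : ℕ, cbellR n j / 2 ^ (j + 1) = pdb n 0) :=
  sum_cbellR_div_two_pow_eq_general n r
end

section
/- For every nonnegative integer n and every real (or polynomial variable) y, ∑_{r=0}^{n} (−1)^r·d_r·w̃_{n,r}(y) = (w_n(y) + w_n(−y))/2. In particular, at y = 1, ∑_{r=0}^{n} (−1)^r·d_r·w̃_{n,r} = (w_n + (−1)^n)/2. -/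
/-- Partial deranged Bell polynomials `w̃_{n,r}(y)`. -/
noncomputable def pdbPoly (n r : ℕ) (y : ℝ) : ℝ :=
  ∑ k ∈ Finset.range (n + 1), (stirling2 n k : ℝ) * pderang k r * y ^ k

/-- Exponential polynomials `φ_n(y) = ∑_{k=0}^n {n brace k} y^k`. -/
def expPoly (n : ℕ) (y : ℝ) : ℝ :=
  ∑ k ∈ Finset.range (n + 1), (stirling2 n k : ℝ) * y ^ k

/-- Geometric polynomials `w_n(y) = ∑_{k=0}^n {n brace k} k! y^k`. -/
def geomPoly (n : ℕ) (y : ℝ) : ℝ :=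
  ∑ k ∈ Finset.range (n + 1), (stirling2 n k : ℝ) * (k.factorial : ℝ) * y ^ k

lemma derang_zero : derang 0 = 1 := by simp [derang]

lemma derang_succ (n : ℕ) : derang (n+1) = (n+1) * derang n + (-1)^(n+1) := by
  have hf : ((n+1).factorial : ℝ) ≠ 0 := by positivity
  rw [derang, Finset.sum_range_succ, mul_add, derang, Nat.factorial_succ]
  push_cast
  field_simp

lemma sum_choose_derang (k : ℕ) :
    ∑ r ∈ Finset.range (k+1), (k.choose r : ℝ) * derang r = k.factorial := by
  induction k with
  | zero => simp [derang_zero]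
  | succ k ih =>
    have halt : ∑ r ∈ Finset.range (k+2), (-1:ℝ)^r * ((k+1).choose r : ℝ) = 0 := by
      have := Int.alternating_sum_range_choose (n := k+1)
      rw [if_neg (Nat.succ_ne_zero k)] at this
      have : ((∑ i ∈ Finset.range (k+2), (-1:ℤ)^i * ((k+1).choose i) : ℤ) : ℝ) = 0 := by
        rw [this]; norm_num
      push_cast at this
      exact this
    rw [Finset.sum_range_succ']
    have step : ∀ j ∈ Finset.range (k+1),
        ((k+1).choose (j+1) : ℝ) * derang (j+1)
          = (k+1) * ((k.choose j : ℝ) * derang j) + (-1:ℝ)^(j+1) * ((k+1).choose (j+1)) := by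
      intro j hj
      rw [derang_succ]
      have hc : (k+1) * k.choose j = (k+1).choose (j+1) * (j+1) := Nat.add_one_mul_choose_eq k j
      have hc' : ((k+1:ℕ):ℝ) * (k.choose j : ℝ) = ((k+1).choose (j+1) : ℝ) * (j+1) := by
        exact_mod_cast congrArg (Nat.cast : ℕ → ℝ) hc
      push_cast at hc' ⊢
      linear_combination (-(derang j)) * hc'
    rw [Finset.sum_congr rfl step, Finset.sum_add_distrib, ← Finset.mul_sum, ih]
    rw [Finset.sum_range_succ'] at halt
    have h0 : (-1:ℝ)^0 * (((k+1).choose 0 : ℕ) : ℝ) = 1 := by simp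
    have hB : ∑ j ∈ Finset.range (k+1), (-1:ℝ)^(j+1) * (((k+1).choose (j+1) : ℕ) : ℝ) = -1 := by
      rw [h0] at halt; linarith
    rw [hB]
    simp [Nat.factorial_succ, derang_zero]

lemma T_eq (k : ℕ) :
    ∑ r ∈ Finset.range (k+1), (-1:ℝ)^r * (k.choose r : ℝ) * derang r * derang (k-r)
      = if Even k then (k.factorial : ℝ) else 0 := by
  induction k with
  | zero => simp [derang_zero]
  | succ k ih =>
    rw [Finset.sum_range_succ]
    have step : ∀ r ∈ Finset.range (k+1),
        (-1:ℝ)^r * ((k+1).choose r : ℝ) * derang r * derang (k+1-r)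
          = (k+1) * ((-1:ℝ)^r * (k.choose r : ℝ) * derang r * derang (k-r))
            + (-1:ℝ)^(k+1) * (((k+1).choose r : ℝ) * derang r) := by
      intro r hr
      have hrk : r ≤ k := Nat.lt_succ_iff.mp (Finset.mem_range.mp hr)
      have h1 : k + 1 - r = (k - r) + 1 := by omega
      rw [h1, derang_succ]
      have hc : k.choose r * (k + 1) = (k+1).choose r * (k + 1 - r) := Nat.choose_mul_succ_eq k r
      have hc' : (k.choose r : ℝ) * (k+1) = ((k+1).choose r : ℝ) * ((k - r : ℕ) + 1) := by
        have := congrArg (Nat.cast : ℕ → ℝ) hc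
        push_cast at this
        rw [this]
        congr 1
        have : ((k + 1 - r : ℕ) : ℝ) = ((k - r : ℕ) : ℝ) + 1 := by
          rw [h1]; push_cast; ring
        exact this
      have hsign : (-1:ℝ)^r * (-1:ℝ)^(k - r + 1) = (-1:ℝ)^(k+1) := by
        rw [← pow_add]
        congr 1
        omega
      calc (-1:ℝ)^r * ((k+1).choose r : ℝ) * derang r
              * ((((k-r:ℕ):ℝ) + 1) * derang (k-r) + (-1:ℝ)^(k-r+1))
          = (-1:ℝ)^r * (((k+1).choose r : ℝ) * (((k-r:ℕ):ℝ)+1)) * derang r * derang (k-r)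
            + ((-1:ℝ)^r * (-1:ℝ)^(k-r+1)) * (((k+1).choose r : ℝ) * derang r) := by ring
        _ = (k+1) * ((-1:ℝ)^r * (k.choose r : ℝ) * derang r * derang (k-r))
            + (-1:ℝ)^(k+1) * (((k+1).choose r : ℝ) * derang r) := by
            rw [hsign, ← hc']; ring
    rw [Finset.sum_congr rfl step, Finset.sum_add_distrib, ← Finset.mul_sum, ih,
      ← Finset.mul_sum]
    have hS : ∑ r ∈ Finset.range (k+1), ((k+1).choose r : ℝ) * derang r
        = ((k+1).factorial : ℝ) - derang (k+1) := by
      have h := sum_choose_derang (k+1)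
      rw [Finset.sum_range_succ] at h
      simp only [Nat.choose_self, Nat.cast_one, one_mul] at h
      linarith
    rw [hS]
    simp only [Nat.choose_self, Nat.cast_one, one_mul, Nat.sub_self, derang_zero, mul_one]
    rcases Nat.even_or_odd k with he | ho
    · rw [if_pos he, if_neg (by simp [Nat.even_add_one, he])]
      have hs : (-1:ℝ)^(k+1) = -1 := (he.add_one).neg_one_pow
      rw [hs, Nat.factorial_succ]
      push_cast
      ring
    · rw [if_neg (by simp [ho]), if_pos (by simp [Nat.even_add_one, ho])]
      have hs : (-1:ℝ)^(k+1) = 1 := (Odd.add_one ho).neg_one_pow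
      rw [hs]
      ring

lemma stirling2_eq_zero : ∀ n k : ℕ, n < k → stirling2 n k = 0
  | 0, _ + 1, _ => rfl
  | n + 1, k + 1, h => by
    show (k + 1) * stirling2 n (k + 1) + stirling2 n k = 0
    rw [stirling2_eq_zero n (k+1) (by omega), stirling2_eq_zero n k (by omega)]
    simp

lemma geomPoly_neg_one (n : ℕ) : geomPoly n (-1) = (-1)^n := by
  induction n with
  | zero => simp [geomPoly, stirling2]
  | succ n ih =>
    rw [geomPoly, Finset.sum_range_succ']
    have h0 : stirling2 (n+1) 0 = 0 := rfl
    rw [h0]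
    simp only [Nat.cast_zero, zero_mul, add_zero]
    have hrec : ∀ j : ℕ, stirling2 (n+1) (j+1) = (j+1) * stirling2 n (j+1) + stirling2 n j :=
      fun j => rfl
    have step : ∀ j ∈ Finset.range (n+1),
        (stirling2 (n+1) (j+1) : ℝ) * ((j+1).factorial : ℝ) * (-1:ℝ)^(j+1)
          = ((j:ℝ)+1) * (stirling2 n (j+1) : ℝ) * ((j+1).factorial : ℝ) * (-1:ℝ)^(j+1)
            + (-(((j:ℝ)+1) * ((stirling2 n j : ℝ) * ((j).factorial : ℝ) * (-1:ℝ)^j))) := by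
      intro j _
      rw [hrec]
      push_cast [Nat.factorial_succ]
      ring
    rw [Finset.sum_congr rfl step, Finset.sum_add_distrib]
    have hA : ∑ j ∈ Finset.range (n+1),
          ((j:ℝ)+1) * (stirling2 n (j+1) : ℝ) * ((j+1).factorial : ℝ) * (-1:ℝ)^(j+1)
        = ∑ k ∈ Finset.range (n+1), (k:ℝ) * (stirling2 n k : ℝ) * (k.factorial : ℝ) * (-1:ℝ)^k := by
      have h1 := Finset.sum_range_succ'
        (fun k => (k:ℝ) * (stirling2 n k : ℝ) * (k.factorial : ℝ) * (-1:ℝ)^k) (n+1)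
      rw [Finset.sum_range_succ, stirling2_eq_zero n (n+1) (by omega)] at h1
      push_cast at h1
      simp only [zero_mul, mul_zero, add_zero] at h1
      rw [← h1]
    rw [hA, ← Finset.sum_add_distrib]
    have step2 : ∀ k ∈ Finset.range (n+1),
        (k:ℝ) * (stirling2 n k : ℝ) * (k.factorial : ℝ) * (-1:ℝ)^k
          + (-(((k:ℝ)+1) * ((stirling2 n k : ℝ) * ((k).factorial : ℝ) * (-1:ℝ)^k)))
          = -((stirling2 n k : ℝ) * (k.factorial : ℝ) * (-1:ℝ)^k) := by
      intro k _
      ring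
    rw [Finset.sum_congr rfl step2, Finset.sum_neg_distrib, ← geomPoly, ih]
    ring

/-- `∑_{r=0}^n (-1)^r d_r w̃_{n,r}(y) = (w_n(y) + w_n(-y))/2`; in
particular at `y = 1`, `∑_{r=0}^n (-1)^r d_r w̃_{n,r} = (w_n + (-1)^n)/2`. -/
theorem sum_neg_one_pow_derang_mul_pdbPoly (n : ℕ) (y : ℝ) :
    (∑ r ∈ Finset.range (n + 1), (-1 : ℝ) ^ r * derang r * pdbPoly n r y =
      (geomPoly n y + geomPoly n (-y)) / 2) ∧
    (∑ r ∈ Finset.range (n + 1), (-1 : ℝ) ^ r * derang r * pdbPoly n r 1 =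
      (geomPoly n 1 + (-1 : ℝ) ^ n) / 2) := by
  have key : ∀ y : ℝ, ∑ r ∈ Finset.range (n+1), (-1:ℝ)^r * derang r * pdbPoly n r y
      = (geomPoly n y + geomPoly n (-y)) / 2 := by
    intro y
    have inner : ∀ k ∈ Finset.range (n+1),
        ∑ r ∈ Finset.range (n+1), (-1:ℝ)^r * derang r * pderang k r
          = if Even k then (k.factorial : ℝ) else 0 := by
      intro k hk
      have hkn : k + 1 ≤ n + 1 := by
        have := Finset.mem_range.mp hk; omega
      rw [← Finset.sum_subset (Finset.range_subset_range.mpr hkn)]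
      · rw [← T_eq k]
        refine Finset.sum_congr rfl fun r hr => ?_
        have hrk : r ≤ k := Nat.lt_succ_iff.mp (Finset.mem_range.mp hr)
        rw [pderang, if_pos hrk]
        ring
      · intro r _ hr
        have hnk : ¬ r ≤ k := by
          simp only [Finset.mem_range] at hr; omega
        rw [pderang, if_neg hnk, mul_zero]
    calc ∑ r ∈ Finset.range (n+1), (-1:ℝ)^r * derang r * pdbPoly n r y
        = ∑ r ∈ Finset.range (n+1), ∑ k ∈ Finset.range (n+1),
            (stirling2 n k : ℝ) * y^k * ((-1:ℝ)^r * derang r * pderang k r) := by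
          refine Finset.sum_congr rfl fun r _ => ?_
          rw [pdbPoly, Finset.mul_sum]
          refine Finset.sum_congr rfl fun k _ => ?_
          ring
      _ = ∑ k ∈ Finset.range (n+1), (stirling2 n k : ℝ) * y^k *
            (∑ r ∈ Finset.range (n+1), (-1:ℝ)^r * derang r * pderang k r) := by
          rw [Finset.sum_comm]
          exact Finset.sum_congr rfl fun k _ => (Finset.mul_sum _ _ _).symm
      _ = ∑ k ∈ Finset.range (n+1), (stirling2 n k : ℝ) * y^k *
            (if Even k then (k.factorial : ℝ) else 0) :=
          Finset.sum_congr rfl fun k hk => by rw [inner k hk]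
      _ = (geomPoly n y + geomPoly n (-y)) / 2 := by
          rw [geomPoly, geomPoly, ← Finset.sum_add_distrib, Finset.sum_div]
          refine Finset.sum_congr rfl fun k _ => ?_
          rcases Nat.even_or_odd k with he | ho
          · rw [if_pos he, he.neg_pow]; ring
          · rw [if_neg (by simpa using Nat.not_even_iff_odd.mpr ho), ho.neg_pow]; ring
  refine ⟨key y, ?_⟩
  rw [key 1]
  norm_num [geomPoly_neg_one]
end
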